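/- arXiv:1710.11328 — 2 statements merged into one kernel-verified Lean document; each statement's English description precedes it below -/
import Mathlib

section
/- For every integer n ≥ 2 and integer m with 1 ≤ m ≤ n−1, the sum over k from 1 to n−1 of sin²(mπk/n)/sin⁴(πk/n) equals m²(n−m)²/3 + (2/3)m(n−m). -/
open Real Finset

/-! Write `θₖ = π k / n`. The sums `C m = ∑ₖ cos (2 m θₖ) / sin² θₖ` and `S m = ∑ₖ sin² (m θₖ) / sin⁴ θₖ`
have second differences `-4 ∑ₖ cos (2 (m + 1) θₖ) = 4` and `2 C (m + 1)` respectively, so on `0 ≤ m ≤ n`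
both are polynomials in `m`, fixed by their values at `0` and `1` up to the constant `c = ∑ₖ 1 / sin² θₖ`.
Since `S n = 0`, evaluating at `m = n` forces `c = (n² - 1) / 3`. -/

theorem eq_of_second_difference_eq {M : Type*} [AddCommGroup M] {f g : ℕ → M} {N : ℕ}
    (h₀ : f 0 = g 0) (h₁ : f 1 = g 1)
    (h : ∀ m, m + 2 ≤ N → f (m + 2) - 2 • f (m + 1) + f m = g (m + 2) - 2 • g (m + 1) + g m) :
    ∀ m ≤ N, f m = g m := by
  suffices ∀ m, (m ≤ N → f m = g m) ∧ (m + 1 ≤ N → f (m + 1) = g (m + 1)) from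
    fun m hm => (this m).1 hm
  intro m
  induction m with
  | zero => exact ⟨fun _ => h₀, fun _ => h₁⟩
  | succ m ih =>
    refine ⟨ih.2, fun hm => ?_⟩
    have := h m hm
    rwa [ih.1 (by omega), ih.2 (by omega), add_left_inj, sub_left_inj] at this

theorem cos_second_difference (t x : ℝ) :
    cos (2 * (t + 2) * x) - 2 * cos (2 * (t + 1) * x) + cos (2 * t * x)
      = -4 * sin x ^ 2 * cos (2 * (t + 1) * x) := by
  have h_add : 2 * (t + 2) * x = 2 * (t + 1) * x + 2 * x := by ring
  have h_sub : 2 * t * x = 2 * (t + 1) * x - 2 * x := by ring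
  rw [h_add, h_sub, cos_add, cos_sub]
  linear_combination 2 * cos (2 * (t + 1) * x) * cos_two_mul_eq_one_sub x

theorem sin_sq_second_difference (t x : ℝ) :
    sin ((t + 2) * x) ^ 2 - 2 * sin ((t + 1) * x) ^ 2 + sin (t * x) ^ 2
      = 2 * sin x ^ 2 * cos (2 * (t + 1) * x) := by
  rw [sin_sq_eq_half_sub ((t + 2) * x), sin_sq_eq_half_sub ((t + 1) * x),
    sin_sq_eq_half_sub (t * x)]
  simp only [← mul_assoc]
  linear_combination -cos_second_difference t x / 2

section

variable {ι : Type*} {s : Finset ι} {θ : ι → ℝ}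

theorem sum_cos_div_sin_sq_second_difference (hθ : ∀ i ∈ s, sin (θ i) ≠ 0) (t : ℝ) :
    ∑ i ∈ s, cos (2 * (t + 2) * θ i) / sin (θ i) ^ 2
        - 2 * ∑ i ∈ s, cos (2 * (t + 1) * θ i) / sin (θ i) ^ 2
        + ∑ i ∈ s, cos (2 * t * θ i) / sin (θ i) ^ 2
      = -4 * ∑ i ∈ s, cos (2 * (t + 1) * θ i) := by
  simp only [mul_sum, ← sum_sub_distrib, ← sum_add_distrib]
  refine sum_congr rfl fun i hi => ?_
  rw [← mul_div_assoc, ← sub_div, ← add_div, cos_second_difference,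
    div_eq_iff (pow_ne_zero 2 (hθ i hi))]
  ring

theorem sum_sin_sq_div_sin_pow_four_second_difference (hθ : ∀ i ∈ s, sin (θ i) ≠ 0) (t : ℝ) :
    ∑ i ∈ s, sin ((t + 2) * θ i) ^ 2 / sin (θ i) ^ 4
        - 2 * ∑ i ∈ s, sin ((t + 1) * θ i) ^ 2 / sin (θ i) ^ 4
        + ∑ i ∈ s, sin (t * θ i) ^ 2 / sin (θ i) ^ 4
      = 2 * ∑ i ∈ s, cos (2 * (t + 1) * θ i) / sin (θ i) ^ 2 := by
  simp only [mul_sum, ← sum_sub_distrib, ← sum_add_distrib]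
  refine sum_congr rfl fun i hi => ?_
  rw [← mul_div_assoc, ← sub_div, ← add_div, sin_sq_second_difference]
  field_simp [hθ i hi]

end

theorem sum_range_cos_two_mul_pi_div_eq_zero {n d : ℕ} (hd : ¬ n ∣ d) :
    ∑ k ∈ range n, cos (2 * d * (π * k / n)) = 0 := by
  obtain rfl | hn := eq_or_ne n 0
  · simp
  set ζ := Complex.exp (2 * π * Complex.I / n)
  have hζ : IsPrimitiveRoot ζ n := Complex.isPrimitiveRoot_exp n hn
  have hζd : ζ ^ d ≠ 1 := by rwa [Ne, hζ.pow_eq_one_iff_dvd]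
  have hgeom : ∑ k ∈ range n, (ζ ^ d) ^ k = 0 := by
    have := geom_sum_mul (ζ ^ d) n
    rw [pow_right_comm, hζ.pow_eq_one, one_pow, sub_self] at this
    exact (mul_eq_zero.mp this).resolve_right (sub_ne_zero.mpr hζd)
  have hre := congrArg Complex.re hgeom
  rw [Complex.re_sum, Complex.zero_re] at hre
  convert hre using 2 with k
  rw [← pow_mul, ← Complex.exp_nat_mul, ← Complex.exp_ofReal_mul_I_re]
  push_cast
  ring_nf

theorem sum_cos_two_mul_pi_div_eq_neg_one {n d : ℕ} (hn : n ≠ 0) (hd : ¬ n ∣ d) :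
    ∑ k ∈ Icc 1 (n - 1), cos (2 * d * (π * k / n)) = -1 := by
  have hrange : range n = insert 0 (Icc 1 (n - 1)) := by
    ext k; simp only [mem_range, mem_insert, mem_Icc]; omega
  have := sum_range_cos_two_mul_pi_div_eq_zero hd
  rw [hrange, sum_insert (by simp)] at this
  simp only [CharP.cast_eq_zero, mul_zero, zero_div, cos_zero] at this
  linarith

theorem sin_pi_mul_div_ne_zero {n k : ℕ} (hk : k ∈ Icc 1 (n - 1)) : sin (π * k / n) ≠ 0 := by
  rw [mem_Icc] at hk
  have hkn : (k : ℝ) < n := by exact_mod_cast (by omega : k < n)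
  have hk0 : (0 : ℝ) < k := by exact_mod_cast hk.1
  have hn0 : (0 : ℝ) < n := hk0.trans hkn
  refine (sin_pos_of_pos_of_lt_pi (by positivity) ?_).ne'
  rw [div_lt_iff₀ hn0]
  exact mul_lt_mul_of_pos_left hkn pi_pos

section

variable {n : ℕ}

theorem sum_cos_two_mul_div_sin_sq (hn : n ≠ 0) (m : ℕ) (hm : m ≤ n) :
    ∑ k ∈ Icc 1 (n - 1), cos (2 * m * (π * k / n)) / sin (π * k / n) ^ 2
      = ∑ k ∈ Icc 1 (n - 1), 1 / sin (π * k / n) ^ 2 - 2 * m * (n - m) := by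
  revert m hm
  refine eq_of_second_difference_eq (M := ℝ) ?_ ?_ fun m hm => ?_
  · simp
  · have hcard : ((Icc 1 (n - 1)).card : ℝ) = n - 1 := by
      rw [Nat.card_Icc, Nat.add_sub_cancel, Nat.cast_sub (by omega), Nat.cast_one]
    have h_one (k) (hk : k ∈ Icc 1 (n - 1)) :
        cos (2 * ((1 : ℕ) : ℝ) * (π * k / n)) / sin (π * k / n) ^ 2
          = 1 / sin (π * k / n) ^ 2 - 2 := by
      rw [Nat.cast_one, mul_one, cos_two_mul_eq_one_sub]
      field_simp [sin_pi_mul_div_ne_zero hk]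
    rw [sum_congr rfl h_one, sum_sub_distrib, sum_const, nsmul_eq_mul, hcard]
    push_cast
    ring
  · have hdvd : ¬ n ∣ m + 1 := Nat.not_dvd_of_pos_of_lt (by omega) (by omega)
    have hdiff := sum_cos_div_sin_sq_second_difference (fun _ => sin_pi_mul_div_ne_zero (n := n)) m
    have hsum := sum_cos_two_mul_pi_div_eq_neg_one hn hdvd
    push_cast [two_nsmul] at hsum ⊢
    linear_combination hdiff - 4 * hsum

theorem sum_sin_sq_div_sin_pow_four_eq (hn : n ≠ 0) (m : ℕ) (hm : m ≤ n) :
    ∑ k ∈ Icc 1 (n - 1), sin (m * (π * k / n)) ^ 2 / sin (π * k / n) ^ 4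
      = m ^ 2 * (n - m) ^ 2 / 3 + 2 / 3 * m * (n - m)
        + (∑ k ∈ Icc 1 (n - 1), 1 / sin (π * k / n) ^ 2 - ((n : ℝ) ^ 2 - 1) / 3) * m ^ 2 := by
  revert m hm
  refine eq_of_second_difference_eq (M := ℝ) ?_ ?_ fun m hm => ?_
  · simp
  · refine (sum_congr rfl fun k hk => ?_).trans (by ring)
    rw [Nat.cast_one, one_mul]
    field_simp [sin_pi_mul_div_ne_zero hk]
  · have hdiff :=
      sum_sin_sq_div_sin_pow_four_second_difference (fun _ => sin_pi_mul_div_ne_zero (n := n)) m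
    have hC := sum_cos_two_mul_div_sin_sq hn (m + 1) (by omega)
    push_cast [two_nsmul] at hC ⊢
    linear_combination hdiff + 2 * hC

theorem sum_one_div_sin_sq (hn : n ≠ 0) :
    ∑ k ∈ Icc 1 (n - 1), 1 / sin (π * k / n) ^ 2 = ((n : ℝ) ^ 2 - 1) / 3 := by
  have h := sum_sin_sq_div_sin_pow_four_eq hn n le_rfl
  have hzero (k : ℕ) : sin (n * (π * k / n)) ^ 2 / sin (π * k / n) ^ 4 = 0 := by
    rw [mul_div_cancel₀ _ (Nat.cast_ne_zero.mpr hn), mul_comm, sin_nat_mul_pi, zero_pow two_ne_zero,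
      zero_div]
  rw [sum_eq_zero fun k _ => hzero k, sub_self] at h
  have hprod : (∑ k ∈ Icc 1 (n - 1), 1 / sin (π * k / n) ^ 2 - ((n : ℝ) ^ 2 - 1) / 3)
      * (n : ℝ) ^ 2 = 0 := by linear_combination -h
  have hn2 : (n : ℝ) ^ 2 ≠ 0 := by positivity
  exact sub_eq_zero.mp ((mul_eq_zero.mp hprod).resolve_right hn2)

end

theorem sum_sin_sq_div_sin_pow_four_general (n m : ℕ) (hm : 1 ≤ m) (hm' : m ≤ n - 1) :
    ∑ k ∈ Finset.Icc 1 (n - 1),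
        (Real.sin ((m : ℝ) * π * k / n)) ^ 2 / (Real.sin (π * k / n)) ^ 4
      = (m : ℝ) ^ 2 * ((n : ℝ) - m) ^ 2 / 3 + (2 / 3) * m * ((n : ℝ) - m) := by
  have hn : n ≠ 0 := by omega
  have hangle (k : ℕ) : (m : ℝ) * π * k / n = m * (π * k / n) := by ring
  simp_rw [hangle]
  rw [sum_sin_sq_div_sin_pow_four_eq hn m (by omega), sum_one_div_sin_sq hn, sub_self, zero_mul,
    add_zero]

theorem sum_sin_sq_div_sin_pow_four (n m : ℕ) (hn : 2 ≤ n) (hm : 1 ≤ m) (hm' : m ≤ n - 1) :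
    ∑ k ∈ Finset.Icc 1 (n - 1),
        (Real.sin ((m : ℝ) * π * k / n)) ^ 2 / (Real.sin (π * k / n)) ^ 4
      = (m : ℝ) ^ 2 * ((n : ℝ) - m) ^ 2 / 3 + (2 / 3) * m * ((n : ℝ) - m) :=
  sum_sin_sq_div_sin_pow_four_general n m hm hm'
end

section
/- Let n ≥ 2 and let A be the circulant matrix of the strong-repulsion model, i.e., A_{ij} = −3/(n⁴ sin⁴(π(i−j)/n)) + 2/(n⁴ sin²(π(i−j)/n)) for i ≠ j and A_{ii} = (n²−1)(n²+11)/(15n⁴) − (2n²−2)/(3n⁴). Then each row of A sums to zero: for every i, A_{ii} = −∑_{j≠i} A_{ij}. -/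
/-!
On `ZMod n` let `q(s) = n s (s - n) / 2 + n (n² - 1) / 12` (`cscSqKernel`), with `s` read in
`[0, n)`. Its second difference is `n - n² δ₀`, so its discrete Fourier transform is
`Q(k) = n² / (4 sin²(πk/n))` for `k ≠ 0`, and `Q(0) = 0`. Fourier inversion at `0` gives
`∑ Q(k) = n q(0)` and Parseval gives `∑ Q(k)² = n ∑ q(s)²`; these evaluate the classical sums
`∑_{k=1}^{n-1} csc²(πk/n) = (n² - 1)/3` and `∑_{k=1}^{n-1} csc⁴(πk/n) = (n² - 1)(n² + 11)/45`,
which are exactly what the row sum needs.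
-/

open Real Finset ZMod

namespace ZMod

theorem natCast_fin_val_injective {N : ℕ} :
    Function.Injective fun j : Fin N ↦ ((j : ℕ) : ZMod N) :=
  fun a b h ↦ Fin.ext <| by
    simpa [val_cast_of_lt a.isLt, val_cast_of_lt b.isLt] using congrArg ZMod.val h

variable {N : ℕ} [NeZero N]

theorem sum_comp_val {M : Type*} [AddCommMonoid M] (f : ℕ → M) :
    ∑ s : ZMod N, f s.val = ∑ v ∈ range N, f v := by
  obtain ⟨m, rfl⟩ := Nat.exists_eq_succ_of_ne_zero (NeZero.ne N)
  -- `ZMod (m + 1)` is `Fin (m + 1)` by definition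
  exact Fin.sum_univ_eq_sum_range f (m + 1)

theorem sum_erase_comp_natCast_sub_natCast {M : Type*} [AddCommMonoid M] (i : Fin N)
    (f : ZMod N → M) :
    ∑ j ∈ univ.erase i, f ((i : ℕ) - (j : ℕ)) = ∑ k ∈ univ.erase 0, f k := by
  have hsub : Function.Injective fun j : Fin N ↦ ((i : ℕ) : ZMod N) - (j : ℕ) :=
    sub_right_injective.comp natCast_fin_val_injective
  refine sum_bijective _ ((Fintype.bijective_iff_injective_and_card _).mpr ⟨hsub, by simp⟩)
    (fun j ↦ ?_) (fun _ _ ↦ rfl)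
  simp only [mem_erase, mem_univ, and_true, ne_eq, sub_eq_zero, eq_comm (a := ((i : ℕ) : ZMod N)),
    natCast_fin_val_injective.eq_iff]

theorem dft_comp_add_const {E : Type*} [AddCommGroup E] [Module ℂ E] (Φ : ZMod N → E)
    (a k : ZMod N) : 𝓕 (fun j ↦ Φ (j + a)) k = stdAddChar (a * k) • 𝓕 Φ k := by
  simp only [dft_apply, Finset.smul_sum, smul_smul, ← AddChar.map_add_eq_mul]
  exact Fintype.sum_equiv (Equiv.addRight a) _ _ fun j ↦ by simp; ring_nf

theorem sum_dft_mul_dft (Φ Ψ : ZMod N → ℂ) :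
    ∑ k, 𝓕 Φ k * 𝓕 Ψ k = N * ∑ j, Φ (-j) * Ψ j := by
  calc ∑ k, 𝓕 Φ k * 𝓕 Ψ k = ∑ j, 𝓕 (𝓕 Φ) j * Ψ j := by
        simp only [dft_apply, smul_eq_mul, mul_sum, sum_mul]
        rw [sum_comm]
        simp only [mul_comm, mul_left_comm]
    _ = N * ∑ j, Φ (-j) * Ψ j := by simp [dft_dft, mul_sum, mul_assoc]

theorem stdAddChar_add_stdAddChar_neg_sub_two (m : ℤ) :
    stdAddChar (m : ZMod N) + stdAddChar (-(m : ZMod N)) - 2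
      = -4 * (Real.sin (π * m / N) : ℂ) ^ 2 := by
  rw [← Int.cast_neg, stdAddChar_coe, stdAddChar_coe, Complex.ofReal_sin]
  push_cast
  set x : ℂ := π * m / N
  rw [show 2 * π * Complex.I * m / N = 2 * x * Complex.I by ring,
    show 2 * π * Complex.I * -m / N = -(2 * x) * Complex.I by ring, ← Complex.two_cos,
    Complex.cos_two_mul, Complex.cos_sq']
  ring

end ZMod

noncomputable def cscSqPoly (n : ℕ) (x : ℂ) : ℂ := n * x * (x - n) / 2 + n * (n ^ 2 - 1) / 12

noncomputable def cscSqKernel (n : ℕ) (s : ZMod n) : ℂ := cscSqPoly n s.val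

theorem cscSqPoly_natCast_sub (n : ℕ) (x : ℂ) : cscSqPoly n (n - x) = cscSqPoly n x := by
  unfold cscSqPoly; ring

theorem sum_range_cscSqPoly (n m : ℕ) :
    ∑ v ∈ range m, cscSqPoly n v = n * m * (m - n) * (2 * m - n - 3) / 12 := by
  induction m with
  | zero => simp
  | succ m ih => rw [sum_range_succ, ih, cscSqPoly]; push_cast; ring

theorem sum_range_cscSqPoly_sq (n m : ℕ) :
    ∑ v ∈ range m, cscSqPoly n v ^ 2 = n ^ 2 * m * (5 * n ^ 4 + 30 * n ^ 3 * (1 - m)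
      + n ^ 2 * (80 * m ^ 2 - 120 * m + 30) - n * (90 * m ^ 3 - 180 * m ^ 2 + 60 * m + 30)
      + 36 * m ^ 4 - 90 * m ^ 3 + 40 * m ^ 2 + 30 * m - 11) / 720 := by
  induction m with
  | zero => simp
  | succ m ih => rw [sum_range_succ, ih, cscSqPoly]; push_cast; ring

theorem cscSqKernel_zero (n : ℕ) : cscSqKernel n 0 = n * (n ^ 2 - 1) / 12 := by
  simp [cscSqKernel, cscSqPoly]

section
variable {n : ℕ} [NeZero n]

theorem cscSqKernel_add_one (s : ZMod n) : cscSqKernel n (s + 1) = cscSqPoly n (s.val + 1) := by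
  have hs : s + 1 = ((s.val + 1 : ℕ) : ZMod n) := by push_cast; rw [natCast_zmod_val]
  rw [cscSqKernel, hs, val_natCast]
  obtain h | h : s.val + 1 < n ∨ s.val + 1 = n := by have := val_lt s; omega
  · rw [Nat.mod_eq_of_lt h]; push_cast; rfl
  · have h' : (s.val : ℂ) + 1 = n := by exact_mod_cast h
    rw [h, Nat.mod_self, h']
    simp [cscSqPoly]

theorem cscSqKernel_neg (s : ZMod n) : cscSqKernel n (-s) = cscSqKernel n s := by
  rw [cscSqKernel, cscSqKernel, neg_val]
  split_ifs with h
  · simp [h]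
  · rw [Nat.cast_sub (val_lt s).le, cscSqPoly_natCast_sub]

theorem cscSqKernel_second_diff (s : ZMod n) :
    cscSqKernel n (s + 1) + cscSqKernel n (s - 1) - 2 * cscSqKernel n s
      = n - if s = 0 then (n : ℂ) ^ 2 else 0 := by
  rw [show s - 1 = -(-s + 1) by ring, cscSqKernel_neg, cscSqKernel_add_one, cscSqKernel_add_one,
    cscSqKernel, neg_val]
  split_ifs with h
  · simp [h, cscSqPoly]; ring
  · rw [Nat.cast_sub (val_lt s).le]; simp only [cscSqPoly]; ring

theorem sum_cscSqKernel : ∑ s, cscSqKernel n s = 0 := by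
  calc ∑ s, cscSqKernel n s = ∑ v ∈ range n, cscSqPoly n v :=
      sum_comp_val fun v ↦ cscSqPoly n v
    _ = 0 := by rw [sum_range_cscSqPoly]; ring

theorem sum_cscSqKernel_sq :
    ∑ s, cscSqKernel n s ^ 2 = n ^ 3 * (n ^ 2 - 1) * (n ^ 2 + 11) / 720 := by
  calc ∑ s, cscSqKernel n s ^ 2 = ∑ v ∈ range n, cscSqPoly n v ^ 2 :=
      sum_comp_val fun v ↦ cscSqPoly n v ^ 2
    _ = _ := by rw [sum_range_cscSqPoly_sq]; ring

theorem dft_cscSqKernel_mul {k : ZMod n} (hk : k ≠ 0) :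
    (stdAddChar k + stdAddChar (-k) - 2) * 𝓕 (cscSqKernel n) k = -n ^ 2 := by
  have hdiff : (fun s ↦ cscSqKernel n (s + 1)) + (fun s ↦ cscSqKernel n (s + -1))
      - (2 : ℂ) • cscSqKernel n = fun s ↦ (n : ℂ) - if s = 0 then (n : ℂ) ^ 2 else 0 := by
    ext s
    simp only [Pi.add_apply, Pi.sub_apply, Pi.smul_apply, smul_eq_mul, ← sub_eq_add_neg]
    exact cscSqKernel_second_diff s
  have hchar : ∑ j : ZMod n, stdAddChar (-(j * k)) = 0 := by
    simpa [hk] using AddChar.sum_mulShift (-k) (isPrimitive_stdAddChar n)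
  have hrhs : 𝓕 (fun s ↦ (n : ℂ) - if s = 0 then (n : ℂ) ^ 2 else 0) k = -n ^ 2 := by
    simp only [dft_apply, smul_eq_mul, mul_sub, sum_sub_distrib, ← sum_mul, hchar, mul_ite,
      mul_zero, sum_ite_eq', mem_univ, if_true, zero_mul, neg_zero, AddChar.map_zero_eq_one]
    ring
  have h := congrFun (congrArg 𝓕 hdiff) k
  rw [hrhs] at h
  simp only [map_sub, map_add, _root_.map_smul, Pi.add_apply, Pi.sub_apply, Pi.smul_apply,
    dft_comp_add_const, one_mul, neg_one_mul, smul_eq_mul] at h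
  linear_combination h

theorem dft_cscSqKernel_zero : 𝓕 (cscSqKernel n) 0 = 0 := by
  rw [dft_apply_zero, sum_cscSqKernel]

theorem sum_dft_cscSqKernel : ∑ k, 𝓕 (cscSqKernel n) k = n ^ 2 * (n ^ 2 - 1) / 12 := by
  rw [← dft_apply_zero, dft_dft]
  simp only [neg_zero, cscSqKernel_zero, smul_eq_mul]
  ring

theorem sum_dft_cscSqKernel_sq :
    ∑ k, 𝓕 (cscSqKernel n) k ^ 2 = n ^ 4 * (n ^ 2 - 1) * (n ^ 2 + 11) / 720 := by
  simp only [sq]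
  rw [sum_dft_mul_dft]
  simp only [cscSqKernel_neg, ← sq, sum_cscSqKernel_sq]
  ring

theorem dft_cscSqKernel_intCast_mul_sin_sq {m : ℤ} (hm : (m : ZMod n) ≠ 0) :
    𝓕 (cscSqKernel n) m * (4 * (Real.sin (π * m / n) : ℂ) ^ 2) = n ^ 2 := by
  linear_combination -(dft_cscSqKernel_mul hm) +
    𝓕 (cscSqKernel n) m * stdAddChar_add_stdAddChar_neg_sub_two (N := n) m

theorem inv_sin_sq_eq_dft_cscSqKernel {i j : Fin n} (hij : j ≠ i) :
    (((Real.sin (π * (((i : ℕ) : ℝ) - ((j : ℕ) : ℝ)) / n) ^ 2)⁻¹ : ℝ) : ℂ)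
      = 4 / n ^ 2 * 𝓕 (cscSqKernel n) ((i : ℕ) - (j : ℕ)) := by
  have hm : (((i : ℤ) - (j : ℤ) : ℤ) : ZMod n) ≠ 0 := by
    push_cast
    exact sub_ne_zero.mpr (natCast_fin_val_injective.ne hij.symm)
  have h := dft_cscSqKernel_intCast_mul_sin_sq hm
  push_cast at h ⊢
  have hn : (n : ℂ) ≠ 0 := Nat.cast_ne_zero.mpr (NeZero.ne n)
  have hs : Complex.sin (π * (i - j) / n) ≠ 0 := by
    rintro h0
    rw [h0] at h
    exact pow_ne_zero 2 hn (by simpa using h.symm)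
  field_simp
  linear_combination -h

theorem sum_inv_sin_sq (i : Fin n) :
    ∑ j ∈ univ.erase i, (Real.sin (π * (((i : ℕ) : ℝ) - ((j : ℕ) : ℝ)) / n) ^ 2)⁻¹
      = ((n : ℝ) ^ 2 - 1) / 3 := by
  apply Complex.ofReal_injective
  rw [Complex.ofReal_sum,
    sum_congr rfl fun j hj ↦ inv_sin_sq_eq_dft_cscSqKernel (ne_of_mem_erase hj), ← mul_sum,
    sum_erase_comp_natCast_sub_natCast i (𝓕 (cscSqKernel n)), sum_erase _ dft_cscSqKernel_zero,
    sum_dft_cscSqKernel]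
  have hn : (n : ℂ) ≠ 0 := Nat.cast_ne_zero.mpr (NeZero.ne n)
  push_cast
  field_simp
  ring

theorem sum_inv_sin_pow_four (i : Fin n) :
    ∑ j ∈ univ.erase i, (Real.sin (π * (((i : ℕ) : ℝ) - ((j : ℕ) : ℝ)) / n) ^ 4)⁻¹
      = ((n : ℝ) ^ 2 - 1) * ((n : ℝ) ^ 2 + 11) / 45 := by
  simp only [show ∀ x : ℝ, (x ^ 4)⁻¹ = ((x ^ 2)⁻¹) ^ 2 by intro x; ring]
  apply Complex.ofReal_injective
  simp only [Complex.ofReal_sum, Complex.ofReal_pow]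
  rw [sum_congr rfl fun j hj ↦ by rw [inv_sin_sq_eq_dft_cscSqKernel (ne_of_mem_erase hj), mul_pow],
    ← mul_sum, sum_erase_comp_natCast_sub_natCast i (𝓕 (cscSqKernel n) · ^ 2),
    sum_erase _ (by rw [dft_cscSqKernel_zero]; ring), sum_dft_cscSqKernel_sq]
  have hn : (n : ℂ) ≠ 0 := Nat.cast_ne_zero.mpr (NeZero.ne n)
  push_cast
  field_simp
  ring

end

theorem circulant_row_sum_zero_general (n : ℕ)
    (A : Matrix (Fin n) (Fin n) ℝ)
    (hA : ∀ i j : Fin n, i ≠ j →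
      A i j = -3 / ((n : ℝ) ^ 4 * Real.sin (π * (((i : ℕ) : ℝ) - ((j : ℕ) : ℝ)) / n) ^ 4)
        + 2 / ((n : ℝ) ^ 4 * Real.sin (π * (((i : ℕ) : ℝ) - ((j : ℕ) : ℝ)) / n) ^ 2))
    (hAd : ∀ i : Fin n, A i i
      = ((n : ℝ) ^ 2 - 1) * ((n : ℝ) ^ 2 + 11) / (15 * (n : ℝ) ^ 4)
        - (2 * (n : ℝ) ^ 2 - 2) / (3 * (n : ℝ) ^ 4)) :
    ∀ i : Fin n, A i i = -∑ j ∈ Finset.univ.erase i, A i j := by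
  intro i
  have : NeZero n := ⟨i.pos.ne'⟩
  have hrow : ∀ j ∈ univ.erase i, A i j
      = -3 / n ^ 4 * (Real.sin (π * (((i : ℕ) : ℝ) - ((j : ℕ) : ℝ)) / n) ^ 4)⁻¹
        + 2 / n ^ 4 * (Real.sin (π * (((i : ℕ) : ℝ) - ((j : ℕ) : ℝ)) / n) ^ 2)⁻¹ := fun j hj ↦ by
    rw [hA i j (ne_of_mem_erase hj).symm]; ring
  rw [hAd, sum_congr rfl hrow, sum_add_distrib, ← mul_sum, ← mul_sum, sum_inv_sin_pow_four,
    sum_inv_sin_sq]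
  field_simp
  ring

theorem circulant_row_sum_zero (n : ℕ) (hn : 2 ≤ n)
    (A : Matrix (Fin n) (Fin n) ℝ)
    (hA : ∀ i j : Fin n, i ≠ j →
      A i j = -3 / ((n : ℝ) ^ 4 * Real.sin (π * (((i : ℕ) : ℝ) - ((j : ℕ) : ℝ)) / n) ^ 4)
        + 2 / ((n : ℝ) ^ 4 * Real.sin (π * (((i : ℕ) : ℝ) - ((j : ℕ) : ℝ)) / n) ^ 2))
    (hAd : ∀ i : Fin n, A i i
      = ((n : ℝ) ^ 2 - 1) * ((n : ℝ) ^ 2 + 11) / (15 * (n : ℝ) ^ 4)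
        - (2 * (n : ℝ) ^ 2 - 2) / (3 * (n : ℝ) ^ 4)) :
    ∀ i : Fin n, A i i = -∑ j ∈ Finset.univ.erase i, A i j :=
  circulant_row_sum_zero_general n A hA hAd
end
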